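/- arXiv:2411.18790 — 4 statements merged into one kernel-verified Lean document; each statement's English description precedes it below -/
import Mathlib

section
/- The Schulze order is a strict partial order: the relation x < y defined by B(x,y) < B(y,x) is irreflexive, asymmetric, and transitive. -/
noncomputable section
open Classical

/-- The minimum weight of an edge along a list of vertices (a walk), `⊤` for walks
with no edges. -/
def pathMin {V : Type*} (w : V → V → ℝ) : List V → EReal
  | a :: b :: rest => min ((w a b : ℝ) : EReal) (pathMin w (b :: rest))
  | _ => ⊤

/-- Beatpath strength: the maximum over directed walks from `x` to `y` of the minimum
edge weight on the walk; `⊤` if `x = y`, `⊥` (= `sSup ∅`) if no walk exists. -/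
def beat {V : Type*} (w : V → V → ℝ) (x y : V) : EReal :=
  if x = y then ⊤
  else sSup {m : EReal | ∃ l : List V,
    l.head? = some x ∧ l.getLast? = some y ∧ m = pathMin w l}

/-- The Schulze order: `x < y` iff `B(x,y) < B(y,x)`. -/
def schulzeLt {V : Type*} (w : V → V → ℝ) (x y : V) : Prop :=
  beat w x y < beat w y x

lemma pathMin_append {V : Type*} (w : V → V → ℝ) :
    ∀ (l1 l2 : List V) (y : V), l1.getLast? = some y → l2.head? = some y →
      min (pathMin w l1) (pathMin w l2) ≤ pathMin w (l1 ++ l2.tail)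
  | [], _, _, h, _ => by simp at h
  | [a], l2, y, h, h2 => by
    simp at h; subst h
    cases l2 with
    | nil => simp at h2
    | cons b t =>
      simp at h2; subst h2
      simp [pathMin]
  | a :: b :: r, l2, y, h, h2 => by
    have ih := pathMin_append w (b :: r) l2 y (by simpa using h) h2
    show min (min _ (pathMin w (b :: r))) (pathMin w l2) ≤
      min ((w a b : ℝ) : EReal) (pathMin w ((b :: r) ++ l2.tail))
    refine le_min (min_le_of_left_le (min_le_left _ _)) ?_
    refine le_trans ?_ ih
    exact le_min (min_le_of_left_le (min_le_right _ _)) (min_le_right _ _)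

lemma beat_min_le {V : Type*} (w : V → V → ℝ) (x y z : V) :
    min (beat w x y) (beat w y z) ≤ beat w x z := by
  by_cases hxz : x = z
  · simp [beat, hxz]
  by_cases hxy : x = y
  · subst hxy; exact min_le_of_right_le le_rfl
  by_cases hyz : y = z
  · subst hyz; exact min_le_of_left_le le_rfl
  rw [beat, if_neg hxy, beat, if_neg hyz, beat, if_neg hxz]
  refine le_of_forall_lt fun c hc => ?_
  obtain ⟨hc1, hc2⟩ := lt_min_iff.mp hc
  obtain ⟨m1, ⟨l1, hl1h, hl1t, rfl⟩, h1⟩ := lt_sSup_iff.mp hc1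
  obtain ⟨m2, ⟨l2, hl2h, hl2t, rfl⟩, h2⟩ := lt_sSup_iff.mp hc2
  obtain ⟨t2, rfl⟩ : ∃ t, l2 = y :: t := by
    cases l2 with
    | nil => simp at hl2h
    | cons b t => simp at hl2h; exact ⟨t, by rw [hl2h]⟩
  have ht2 : t2 ≠ [] := by
    rintro rfl
    simp at hl2t
    exact hyz hl2t
  obtain ⟨a1, r1, rfl⟩ : ∃ a r, l1 = a :: r := by
    cases l1 with
    | nil => simp at hl1h
    | cons b t => exact ⟨b, t, rfl⟩
  have ha1 : x = a1 := by simpa using hl1h.symm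
  subst ha1
  have hmem : pathMin w ((x :: r1) ++ t2) ∈ {m : EReal | ∃ l : List V,
      l.head? = some x ∧ l.getLast? = some z ∧ m = pathMin w l} := by
    refine ⟨(x :: r1) ++ t2, by simp, ?_, rfl⟩
    rw [List.getLast?_append_of_ne_nil _ ht2]
    cases t2 with
    | nil => exact absurd rfl ht2
    | cons b t => simpa [List.getLast?_cons_cons] using hl2t
  have key := pathMin_append w (x :: r1) (y :: t2) y hl1t hl2h
  have : c < pathMin w ((x :: r1) ++ t2) :=
    lt_of_lt_of_le (lt_min h1 h2) (by simpa using key)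
  exact lt_of_lt_of_le this (le_sSup hmem)

/-- The Schulze order is a strict partial order: it is irreflexive, asymmetric,
and transitive. -/
theorem schulze_strict_partial_order {V : Type*} [Fintype V] (w : V → V → ℝ) :
    (∀ x, ¬ schulzeLt w x x) ∧
    (∀ x y, schulzeLt w x y → ¬ schulzeLt w y x) ∧
    (∀ x y z, schulzeLt w x y → schulzeLt w y z → schulzeLt w x z) := by
  refine ⟨fun x => lt_irrefl _, fun x y h => lt_asymm h, fun x y z hxy hyz => ?_⟩
  unfold schulzeLt at *
  set a := beat w x y
  set a' := beat w y x
  set b := beat w y z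
  set b' := beat w z y
  set c := beat w x z
  set c' := beat w z x
  by_contra hcon
  push_neg at hcon
  have K1 : min a' c ≤ b := beat_min_le w y x z
  have K2 : min c b' ≤ a := beat_min_le w x z y
  have K3 : min b' a' ≤ c' := beat_min_le w z y x
  rcases min_le_iff.mp K1 with h1 | h1 <;> rcases min_le_iff.mp K2 with h2 | h2 <;>
    rcases min_le_iff.mp K3 with h3 | h3
  · exact lt_irrefl b' (calc b' ≤ c' := h3
      _ ≤ c := hcon
      _ ≤ a := h2
      _ < a' := hxy
      _ ≤ b := h1
      _ < b' := hyz)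
  · exact lt_irrefl a' (calc a' ≤ c' := h3
      _ ≤ c := hcon
      _ ≤ a := h2
      _ < a' := hxy)
  · exact lt_irrefl a (calc a < a' := hxy
      _ ≤ b := h1
      _ < b' := hyz
      _ ≤ a := h2)
  · exact lt_irrefl a (calc a < a' := hxy
      _ ≤ b := h1
      _ < b' := hyz
      _ ≤ a := h2)
  · exact lt_irrefl b' (calc b' ≤ c' := h3
      _ ≤ c := hcon
      _ ≤ b := h1
      _ < b' := hyz)
  · exact lt_irrefl a' (calc a' ≤ c' := h3
      _ ≤ c := hcon
      _ ≤ a := h2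
      _ < a' := hxy)
  · exact lt_irrefl b' (calc b' ≤ c' := h3
      _ ≤ c := hcon
      _ ≤ b := h1
      _ < b' := hyz)
  · exact lt_irrefl a' (calc a' ≤ c' := h3
      _ ≤ c := hcon
      _ ≤ b := h1
      _ < b' := hyz
      _ ≤ a := h2
      _ < a' := hxy)

end
end

section
/- There exists a complete directed graph on 4 vertices {A, B, C, D} with antisymmetric weights (positive edges: B→A weight 1, D→B weight 2, C→D weight 3, A→D weight 4, B→C weight 5, A→C weight 6) such that in the full graph the Schulze order satisfies A > B, but in the induced subgraph on {A, B, C} (and on {A, B}) the Schulze order satisfies B > A. -/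
noncomputable section
open Classical

/-- Beatpath strength in the induced subgraph on `T`: the maximum over directed walks
from `x` to `y` staying inside `T` of the minimum edge weight on the walk. -/
def beatOn {V : Type*} (w : V → V → ℝ) (T : Set V) (x y : V) : EReal :=
  if x = y then ⊤
  else sSup {m : EReal | ∃ l : List V,
    l.head? = some x ∧ l.getLast? = some y ∧ (∀ v ∈ l, v ∈ T) ∧ m = pathMin w l}

/-- The weighted majority graph of Example 2: vertices `A = 0`, `B = 1`, `C = 2`,
`D = 3`; positive edges `B→A (1)`, `D→B (2)`, `C→D (3)`, `A→D (4)`, `B→C (5)`,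
`A→C (6)`, with antisymmetric (negated) reverse edges. -/
def wEx : Fin 4 → Fin 4 → ℝ := fun i j =>
  match i, j with
  | 1, 0 => 1 | 0, 1 => -1
  | 3, 1 => 2 | 1, 3 => -2
  | 2, 3 => 3 | 3, 2 => -3
  | 0, 3 => 4 | 3, 0 => -4
  | 1, 2 => 5 | 2, 1 => -5
  | 0, 2 => 6 | 2, 0 => -6
  | _, _ => 0

/-!
Every walk from `x` to `y ≠ x` ends with an edge `a → y`, so `B(x, y)` is at most the
heaviest edge into `y` from the allowed vertices, while any single walk bounds it from
below. In the full graph the only positive edge into `A` has weight `1`, yet the walk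
`A → D → B` has strength `2`. Once `D` is deleted the only positive edge into `B` is
gone, so `B(A, B) ≤ -1 < 1 = w(B, A) ≤ B(B, A)`.
-/

section Beatpath

variable {V : Type*} (w : V → V → ℝ)

lemma exists_mem_ne_pathMin_le_weight {y : V} :
    ∀ (l : List V) {x : V}, l.head? = some x → l.getLast? = some y → x ≠ y →
      ∃ a ∈ l, a ≠ y ∧ pathMin w l ≤ (w a y : EReal)
  | [], _, hx, _, _ => by simp at hx
  | [a], _, hx, hy, hxy => by
      simp only [List.head?_cons, List.getLast?_singleton, Option.some.injEq] at hx hy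
      exact absurd (hx.symm.trans hy) hxy
  | a :: b :: rest, _, hx, hy, hxy => by
      simp only [List.head?_cons, Option.some.injEq] at hx
      subst hx
      by_cases hb : b = y
      · subst hb
        exact ⟨a, List.mem_cons_self, hxy, min_le_left _ _⟩
      · rw [List.getLast?_cons_cons] at hy
        obtain ⟨c, hc, hcy, hle⟩ := exists_mem_ne_pathMin_le_weight (b :: rest) rfl hy hb
        exact ⟨c, List.mem_cons_of_mem _ hc, hcy, (min_le_right _ _).trans hle⟩

variable {w}

lemma beatOn_le_of_forall_weight_le {T : Set V} {x y : V} (hxy : x ≠ y) {c : ℝ}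
    (h : ∀ a ∈ T, a ≠ y → w a y ≤ c) : beatOn w T x y ≤ c := by
  rw [beatOn, if_neg hxy]
  refine sSup_le ?_
  rintro _ ⟨l, hx, hy, hT, rfl⟩
  obtain ⟨a, ha, hay, hle⟩ := exists_mem_ne_pathMin_le_weight w l hx hy hxy
  exact hle.trans (EReal.coe_le_coe_iff.mpr (h a (hT a ha) hay))

lemma pathMin_le_beatOn {T : Set V} {x y : V} {l : List V} (hx : l.head? = some x)
    (hy : l.getLast? = some y) (hT : ∀ v ∈ l, v ∈ T) : pathMin w l ≤ beatOn w T x y := by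
  unfold beatOn
  split_ifs
  · exact le_top
  · exact le_sSup ⟨l, hx, hy, hT, rfl⟩

end Beatpath

lemma wEx_antisymm (x y : Fin 4) : wEx x y = -wEx y x := by
  fin_cases x <;> fin_cases y <;> simp [wEx]

/-- In the full graph of Example 2 the Schulze order has `A > B`
(`B(A,B) > B(B,A)`), but in the induced subgraph on `{A, B, C}`, and also on
`{A, B}`, the Schulze order has `B > A`: beatpath comparisons are not preserved
under vertex deletion. -/
theorem induced_subgraph_counterexample :
    (∀ x y, wEx x y = - wEx y x) ∧
    beatOn wEx Set.univ 1 0 < beatOn wEx Set.univ 0 1 ∧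
    beatOn wEx {0, 1, 2} 0 1 < beatOn wEx {0, 1, 2} 1 0 ∧
    beatOn wEx {0, 1} 0 1 < beatOn wEx {0, 1} 1 0 := by
  have edge_BA : ((1 : ℝ) : EReal) ≤ pathMin wEx [1, 0] := by simp [pathMin, wEx]
  refine ⟨wEx_antisymm, ?_, ?_, ?_⟩
  · calc beatOn wEx Set.univ 1 0 ≤ ((1 : ℝ) : EReal) :=
          beatOn_le_of_forall_weight_le (by decide) fun a _ ha => by
            fin_cases a <;> simp [wEx] at ha ⊢ <;> norm_num
      _ < ((2 : ℝ) : EReal) := EReal.coe_lt_coe_iff.mpr (by norm_num)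
      _ ≤ pathMin wEx [0, 3, 1] := by simp [pathMin, wEx]; norm_num
      _ ≤ _ := pathMin_le_beatOn rfl rfl (by simp)
  · calc beatOn wEx {0, 1, 2} 0 1 ≤ ((-1 : ℝ) : EReal) :=
          beatOn_le_of_forall_weight_le (by decide) fun a ha hne => by
            rcases ha with rfl | rfl | rfl <;> simp [wEx] at hne ⊢
      _ < ((1 : ℝ) : EReal) := EReal.coe_lt_coe_iff.mpr (by norm_num)
      _ ≤ _ := edge_BA.trans (pathMin_le_beatOn rfl rfl (by simp))
  · calc beatOn wEx {0, 1} 0 1 ≤ ((-1 : ℝ) : EReal) :=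
          beatOn_le_of_forall_weight_le (by decide) fun a ha hne => by
            rcases ha with rfl | rfl <;> simp [wEx] at hne ⊢
      _ < ((1 : ℝ) : EReal) := EReal.coe_lt_coe_iff.mpr (by norm_num)
      _ ≤ _ := edge_BA.trans (pathMin_le_beatOn rfl rfl (by simp))
end
end

section
/- Every strict partial order on a finite set M of size at least 2 that has a unique maximal element t and a unique minimal element b (with t ≠ b, t above all other elements, b below all other elements) can be realized as the Schulze order of some complete directed graph on M with antisymmetric real edge weights. -/
noncomputable section
open Classical
set_option linter.unusedSectionVars false
set_option linter.unusedVariables false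

section aux
variable {V : Type*} (w : V → V → ℝ)

lemma pathMin_cc (a b : V) (l : List V) :
    pathMin w (a :: b :: l) = min ((w a b : ℝ) : EReal) (pathMin w (b :: l)) := rfl

lemma pathMin_single (a : V) : pathMin w [a] = ⊤ := rfl

lemma pathMin_pair (a c : V) : pathMin w [a, c] = ((w a c : ℝ) : EReal) := by
  rw [pathMin_cc, pathMin_single]; exact min_eq_left le_top

lemma pathMin_triple (a c d : V) :
    pathMin w [a, c, d] = min ((w a c : ℝ) : EReal) ((w c d : ℝ) : EReal) := by
  rw [pathMin_cc, pathMin_pair]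

lemma pathMin_quad (a c d e : V) :
    pathMin w [a, c, d, e]
      = min ((w a c : ℝ) : EReal) (min ((w c d : ℝ) : EReal) ((w d e : ℝ) : EReal)) := by
  rw [pathMin_cc, pathMin_triple]

lemma le_beat {x y : V} (hxy : x ≠ y) (l : List V) (h1 : l.head? = some x)
    (h2 : l.getLast? = some y) : pathMin w l ≤ beat w x y := by
  unfold beat; rw [if_neg hxy]; exact le_sSup ⟨l, h1, h2, rfl⟩

lemma beat_le {x y : V} (hxy : x ≠ y) {c : EReal}
    (h : ∀ l : List V, l.head? = some x → l.getLast? = some y → pathMin w l ≤ c) :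
    beat w x y ≤ c := by
  unfold beat; rw [if_neg hxy]
  exact sSup_le (by rintro m ⟨l, h1, h2, rfl⟩; exact h l h1 h2)

lemma cut_pathMin (S : V → Prop) (c : EReal)
    (hS : ∀ a b, S a → ¬ S b → ((w a b : ℝ) : EReal) ≤ c) :
    ∀ (l : List V) (x y : V), l.head? = some x → l.getLast? = some y →
      S x → ¬ S y → pathMin w l ≤ c
  | [], x, y, h1, _, _, _ => by simp at h1
  | [a], x, y, h1, h2, hx, hy => by
      simp at h1 h2; subst h1; subst h2; exact absurd hx hy
  | a :: b :: l, x, y, h1, h2, hx, hy => by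
      have hax : a = x := by simpa using h1
      subst hax
      by_cases hb : S b
      · have h2' : (b :: l).getLast? = some y := by rwa [List.getLast?_cons_cons] at h2
        exact le_trans (min_le_right _ _)
          (cut_pathMin S c hS (b :: l) b y rfl h2' hb hy)
      · exact le_trans (min_le_left _ _) (hS a b hx hb)

lemma beat_cut {x y : V} (S : V → Prop) (c : EReal)
    (hS : ∀ a b, S a → ¬ S b → ((w a b : ℝ) : EReal) ≤ c)
    (hx : S x) (hy : ¬ S y) : beat w x y ≤ c :=
  beat_le w (by rintro rfl; exact hy hx)
    (fun l h1 h2 => cut_pathMin w S c hS l x y h1 h2 hx hy)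

lemma beat_refl (x : V) : beat w x x = ⊤ := if_pos rfl

end aux

namespace RealizeAux
variable {M : Type*} (lt : M → M → Prop) (t b : M)

/-- One-directional ("forward") weights of the construction. -/
def cv (x y : M) : ℝ :=
  if x = t ∧ y ≠ t ∧ y ≠ b then 4
  else if y = b ∧ x ≠ b ∧ x ≠ t then 4
  else if x = b ∧ y = t then (if ∃ z : M, z ≠ t ∧ z ≠ b then 2 else 0)
  else if x = t ∧ y = b then (if ∃ z : M, z ≠ t ∧ z ≠ b then 0 else 2)
  else if x ≠ t ∧ x ≠ b ∧ y ≠ t ∧ y ≠ b ∧ x ≠ y ∧ lt y x then 3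
  else 0

/-- The antisymmetrized weights. -/
def cw (x y : M) : ℝ := cv lt t b x y - cv lt t b y x

lemma cv_nonneg (x y : M) : 0 ≤ cv lt t b x y := by
  unfold cv; split_ifs <;> norm_num

lemma cw_le (x y : M) : cw lt t b x y ≤ cv lt t b x y := by
  have := cv_nonneg lt t b y x
  unfold cw; linarith

variable (htb : t ≠ b)
include htb

lemma cv_t_mid {x : M} (h1 : x ≠ t) (h2 : x ≠ b) : cv lt t b t x = 4 := by
  unfold cv; rw [if_pos ⟨rfl, h1, h2⟩]

lemma cv_mid_t {x : M} (h1 : x ≠ t) (h2 : x ≠ b) : cv lt t b x t = 0 := by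
  unfold cv
  rw [if_neg (show ¬(x = t ∧ t ≠ t ∧ t ≠ b) from fun h => h.2.1 rfl),
    if_neg (show ¬(t = b ∧ x ≠ b ∧ x ≠ t) from fun h => htb h.1),
    if_neg (show ¬(x = b ∧ t = t) from fun h => h2 h.1),
    if_neg (show ¬(x = t ∧ t = b) from fun h => h1 h.1),
    if_neg (show ¬(x ≠ t ∧ x ≠ b ∧ t ≠ t ∧ t ≠ b ∧ x ≠ t ∧ lt t x) from
      fun h => h.2.2.1 rfl)]

lemma cv_mid_b {x : M} (h1 : x ≠ t) (h2 : x ≠ b) : cv lt t b x b = 4 := by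
  unfold cv
  rw [if_neg (show ¬(x = t ∧ b ≠ t ∧ b ≠ b) from fun h => h.2.2 rfl),
    if_pos (show b = b ∧ x ≠ b ∧ x ≠ t from ⟨rfl, h2, h1⟩)]

lemma cv_b_mid {x : M} (h1 : x ≠ t) (h2 : x ≠ b) : cv lt t b b x = 0 := by
  unfold cv
  rw [if_neg (show ¬(b = t ∧ x ≠ t ∧ x ≠ b) from fun h => htb h.1.symm),
    if_neg (show ¬(x = b ∧ b ≠ b ∧ b ≠ t) from fun h => h.2.1 rfl),
    if_neg (show ¬(b = b ∧ x = t) from fun h => h1 h.2),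
    if_neg (show ¬(b = t ∧ x = b) from fun h => htb h.1.symm),
    if_neg (show ¬(b ≠ t ∧ b ≠ b ∧ x ≠ t ∧ x ≠ b ∧ b ≠ x ∧ lt x b) from
      fun h => h.2.1 rfl)]

lemma cw_t_mid {x : M} (h1 : x ≠ t) (h2 : x ≠ b) : cw lt t b t x = 4 := by
  unfold cw; rw [cv_t_mid lt t b htb h1 h2, cv_mid_t lt t b htb h1 h2]; norm_num

lemma cw_mid_b {x : M} (h1 : x ≠ t) (h2 : x ≠ b) : cw lt t b x b = 4 := by
  unfold cw; rw [cv_mid_b lt t b htb h1 h2, cv_b_mid lt t b htb h1 h2]; norm_num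

lemma cv_b_t : cv lt t b b t = (if ∃ z : M, z ≠ t ∧ z ≠ b then 2 else 0) := by
  unfold cv
  rw [if_neg (show ¬(b = t ∧ t ≠ t ∧ t ≠ b) from fun h => h.2.1 rfl),
    if_neg (show ¬(t = b ∧ b ≠ b ∧ b ≠ t) from fun h => h.2.1 rfl),
    if_pos (show b = b ∧ t = t from ⟨rfl, rfl⟩)]

lemma cv_t_b : cv lt t b t b = (if ∃ z : M, z ≠ t ∧ z ≠ b then 0 else 2) := by
  unfold cv
  rw [if_neg (show ¬(t = t ∧ b ≠ t ∧ b ≠ b) from fun h => h.2.2 rfl),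
    if_neg (show ¬(b = b ∧ t ≠ b ∧ t ≠ t) from fun h => h.2.2 rfl),
    if_neg (show ¬(t = b ∧ b = t) from fun h => htb h.1),
    if_pos (show t = t ∧ b = b from ⟨rfl, rfl⟩)]

lemma cw_b_t (hm : ∃ z : M, z ≠ t ∧ z ≠ b) : cw lt t b b t = 2 := by
  unfold cw; rw [cv_b_t lt t b htb, cv_t_b lt t b htb, if_pos hm, if_pos hm]; norm_num

lemma cw_b_t_nomid (hm : ¬ ∃ z : M, z ≠ t ∧ z ≠ b) : cw lt t b b t = -2 := by
  unfold cw; rw [cv_b_t lt t b htb, cv_t_b lt t b htb, if_neg hm, if_neg hm]; norm_num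

set_option maxHeartbeats 1000000 in
lemma cv_med {x y : M} (hx1 : x ≠ t) (hx2 : x ≠ b) (hy1 : y ≠ t) (hy2 : y ≠ b)
    (hxy : x ≠ y) (h : lt y x) : cv lt t b x y = 3 := by
  unfold cv
  rw [if_neg (show ¬(x = t ∧ y ≠ t ∧ y ≠ b) from fun g => hx1 g.1),
    if_neg (show ¬(y = b ∧ x ≠ b ∧ x ≠ t) from fun g => hy2 g.1),
    if_neg (show ¬(x = b ∧ y = t) from fun g => hx2 g.1),
    if_neg (show ¬(x = t ∧ y = b) from fun g => hx1 g.1),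
    if_pos (show x ≠ t ∧ x ≠ b ∧ y ≠ t ∧ y ≠ b ∧ x ≠ y ∧ lt y x from
      ⟨hx1, hx2, hy1, hy2, hxy, h⟩)]

lemma cv_med0 {x y : M} (hx1 : x ≠ t) (hx2 : x ≠ b) (hy1 : y ≠ t) (hy2 : y ≠ b)
    (hxy : x ≠ y) (h : ¬ lt x y) : cv lt t b y x = 0 := by
  unfold cv
  rw [if_neg (show ¬(y = t ∧ x ≠ t ∧ x ≠ b) from fun g => hy1 g.1),
    if_neg (show ¬(x = b ∧ y ≠ b ∧ y ≠ t) from fun g => hx2 g.1),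
    if_neg (show ¬(y = b ∧ x = t) from fun g => hy2 g.1),
    if_neg (show ¬(y = t ∧ x = b) from fun g => hy1 g.1),
    if_neg (show ¬(y ≠ t ∧ y ≠ b ∧ x ≠ t ∧ x ≠ b ∧ y ≠ x ∧ lt x y) from
      fun g => h g.2.2.2.2.2)]

lemma cw_med (asymm : ∀ x y, lt x y → ¬ lt y x) {x y : M}
    (hx1 : x ≠ t) (hx2 : x ≠ b) (hy1 : y ≠ t) (hy2 : y ≠ b)
    (h : lt y x) : cw lt t b x y = 3 := by
  have hxy : x ≠ y := by rintro rfl; exact asymm _ _ h h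
  unfold cw
  rw [cv_med lt t b htb hx1 hx2 hy1 hy2 hxy h,
    cv_med0 lt t b htb hx1 hx2 hy1 hy2 hxy (asymm _ _ h)]
  norm_num

lemma cv_to_t (a : M) : cv lt t b a t ≤ 2 := by
  unfold cv; split_ifs <;> first | tauto | norm_num

lemma cv_from_b (a : M) : cv lt t b b a ≤ 2 := by
  unfold cv; split_ifs <;> first | tauto | norm_num

set_option maxHeartbeats 2000000 in
lemma cv_cut (asymm : ∀ x y, lt x y → ¬ lt y x)
    (trans : ∀ x y z, lt x y → lt y z → lt x z)
    (htop : ∀ x, x ≠ t → lt x t)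
    {x : M} (hx1 : x ≠ t) (hx2 : x ≠ b) (a c : M)
    (ha : a = x ∨ lt a x ∨ a = b) (hc : ¬ (c = x ∨ lt c x ∨ c = b)) :
    cv lt t b a c ≤ 2 := by
  push_neg at hc
  obtain ⟨hc1, hc2, hc3⟩ := hc
  have hat : a ≠ t := by
    rintro rfl
    rcases ha with h | h | h
    · exact hx1 h.symm
    · exact asymm _ _ (htop x hx1) h
    · exact htb h
  have hmed : ¬ (a ≠ t ∧ a ≠ b ∧ c ≠ t ∧ c ≠ b ∧ a ≠ c ∧ lt c a) := by
    rintro ⟨_, hab, _, _, _, hca⟩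
    rcases ha with rfl | h | rfl
    · exact hc2 hca
    · exact hc2 (trans _ _ _ hca h)
    · exact hab rfl
  clear asymm trans htop ha
  unfold cv; split_ifs <;> first | tauto | norm_num

end RealizeAux

/-- Every strict partial order on a finite set `M` (of size at least 2) with a unique
maximal element `t` (above all other elements) and a unique minimal element `b`
(below all other elements), `t ≠ b`, can be realized as the Schulze order of some
complete directed graph on `M` with antisymmetric real edge weights. -/
theorem realize_partial_order {M : Type*} [Fintype M] (lt : M → M → Prop)
    (asymm : ∀ x y, lt x y → ¬ lt y x)
    (trans : ∀ x y z, lt x y → lt y z → lt x z)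
    (t b : M) (htb : t ≠ b)
    (htop : ∀ x, x ≠ t → lt x t)
    (hbot : ∀ x, x ≠ b → lt b x) :
    ∃ w : M → M → ℝ, (∀ x y, w x y = - w y x) ∧
      ∀ x y, lt x y ↔ schulzeLt w x y := by
  classical
  refine ⟨RealizeAux.cw lt t b, fun x y => by unfold RealizeAux.cw; ring, ?_⟩
  set w : M → M → ℝ := RealizeAux.cw lt t b with hw
  have h24 : ((2:ℝ):EReal) < ((4:ℝ):EReal) := by exact_mod_cast (by norm_num : (2:ℝ) < 4)
  have h23 : ((2:ℝ):EReal) < ((3:ℝ):EReal) := by exact_mod_cast (by norm_num : (2:ℝ) < 3)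
  have hm22 : ((-2:ℝ):EReal) < ((2:ℝ):EReal) := by exact_mod_cast (by norm_num : (-2:ℝ) < 2)
  -- upper bounds
  have hBt : ∀ z, z ≠ t → beat w z t ≤ ((2:ℝ):EReal) := by
    intro z hz
    refine beat_cut w (fun a => a ≠ t) _ ?_ hz (by simp)
    intro a c ha hc
    have hc' : c = t := not_ne_iff.mp hc
    rw [hc']
    exact EReal.coe_le_coe_iff.mpr
      (le_trans (RealizeAux.cw_le lt t b a t) (RealizeAux.cv_to_t lt t b htb a))
  have hBb : ∀ z, z ≠ b → beat w b z ≤ ((2:ℝ):EReal) := by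
    intro z hz
    refine beat_cut w (fun a => a = b) _ ?_ rfl hz
    intro a c ha hc
    rw [ha]
    exact EReal.coe_le_coe_iff.mpr
      (le_trans (RealizeAux.cw_le lt t b b c) (RealizeAux.cv_from_b lt t b htb c))
  have hBmid : ∀ x y : M, x ≠ t → x ≠ b → ¬ lt y x → y ≠ x → y ≠ b →
      beat w x y ≤ ((2:ℝ):EReal) := by
    intro x y hx1 hx2 hyx hyx' hyb
    refine beat_cut w (fun a => a = x ∨ lt a x ∨ a = b) _ ?_ (Or.inl rfl) ?_
    · intro a c ha hc
      exact EReal.coe_le_coe_iff.mpr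
        (le_trans (RealizeAux.cw_le lt t b a c)
          (RealizeAux.cv_cut lt t b htb asymm trans htop hx1 hx2 a c ha hc))
    · rintro (h | h | h)
      · exact hyx' h
      · exact hyx h
      · exact hyb h
  -- lower bounds
  have hLtx : ∀ x : M, x ≠ t → x ≠ b → ((4:ℝ):EReal) ≤ beat w t x := by
    intro x h1 h2
    refine le_trans ?_ (le_beat w (fun h => h1 h.symm) [t, x] rfl (by simp))
    rw [pathMin_pair, hw, RealizeAux.cw_t_mid lt t b htb h1 h2]
  have hLxb : ∀ x : M, x ≠ t → x ≠ b → ((4:ℝ):EReal) ≤ beat w x b := by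
    intro x h1 h2
    refine le_trans ?_ (le_beat w h2 [x, b] rfl (by simp))
    rw [pathMin_pair, hw, RealizeAux.cw_mid_b lt t b htb h1 h2]
  have hLtb : (∃ z : M, z ≠ t ∧ z ≠ b) → ((4:ℝ):EReal) ≤ beat w t b := by
    rintro ⟨z, hz1, hz2⟩
    refine le_trans ?_ (le_beat w htb [t, z, b] rfl (by simp))
    rw [pathMin_triple, hw, RealizeAux.cw_t_mid lt t b htb hz1 hz2,
      RealizeAux.cw_mid_b lt t b htb hz1 hz2]
    simp
  have hLmed : ∀ x y : M, x ≠ t → x ≠ b → y ≠ t → y ≠ b → lt y x →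
      ((3:ℝ):EReal) ≤ beat w x y := by
    intro x y hx1 hx2 hy1 hy2 h
    have hxy : x ≠ y := by rintro rfl; exact asymm _ _ h h
    refine le_trans ?_ (le_beat w hxy [x, y] rfl (by simp))
    rw [pathMin_pair, hw, RealizeAux.cw_med lt t b htb asymm hx1 hx2 hy1 hy2 h]
  have hL2 : ∀ x y : M, x ≠ t → x ≠ b → y ≠ t → y ≠ b → x ≠ y →
      ((2:ℝ):EReal) ≤ beat w x y := by
    intro x y hx1 hx2 hy1 hy2 hxy
    refine le_trans ?_ (le_beat w hxy [x, b, t, y] rfl (by simp))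
    rw [pathMin_quad, hw, RealizeAux.cw_mid_b lt t b htb hx1 hx2,
      RealizeAux.cw_b_t lt t b htb ⟨x, hx1, hx2⟩,
      RealizeAux.cw_t_mid lt t b htb hy1 hy2]
    refine le_min (by exact_mod_cast (by norm_num : (2:ℝ) ≤ 4))
      (le_min le_rfl (by exact_mod_cast (by norm_num : (2:ℝ) ≤ 4)))
  -- the two-element case bounds
  have hNoMid : (¬ ∃ z : M, z ≠ t ∧ z ≠ b) →
      beat w b t ≤ ((-2:ℝ):EReal) ∧ ((2:ℝ):EReal) ≤ beat w t b := by
    intro hm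
    constructor
    · refine beat_cut w (fun a => a ≠ t) _ ?_ htb.symm (by simp)
      intro a c ha hc
      have hc' : c = t := not_ne_iff.mp hc
      have hab : a = b := by
        by_contra hab
        exact hm ⟨a, ha, hab⟩
      rw [hc', hab, hw, RealizeAux.cw_b_t_nomid lt t b htb hm]
    · have hv : RealizeAux.cw lt t b t b = 2 := by
        have h2 := RealizeAux.cw_b_t_nomid lt t b htb hm
        unfold RealizeAux.cw at h2 ⊢
        linarith
      refine le_trans ?_ (le_beat w htb [t, b] rfl (by simp))
      rw [pathMin_pair, hw, hv]
  -- bundled: for any x ≠ t, beat w x t < beat w t x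
  have hKey : ∀ x : M, x ≠ t → beat w x t < beat w t x := by
    intro x hx
    by_cases hxb : x = b
    · rw [hxb]
      by_cases hm : ∃ z : M, z ≠ t ∧ z ≠ b
      · exact lt_of_le_of_lt (hBt b htb.symm) (lt_of_lt_of_le h24 (hLtb hm))
      · obtain ⟨hb1, hb2⟩ := hNoMid hm
        exact lt_of_le_of_lt hb1 (lt_of_lt_of_le hm22 hb2)
    · exact lt_of_le_of_lt (hBt x hx) (lt_of_lt_of_le h24 (hLtx x hx hxb))
  -- main case analysis
  intro x y
  rcases eq_or_ne x y with rfl | hxy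
  · exact iff_of_false (fun h => asymm _ _ h h) (by simp [schulzeLt, beat_refl])
  by_cases hyt : y = t
  · rw [hyt]
    have hxt : x ≠ t := fun h => hxy (h.trans hyt.symm)
    exact iff_of_true (htop x hxt) (hKey x hxt)
  by_cases hxt : x = t
  · rw [hxt]
    exact iff_of_false (asymm _ _ (htop y hyt))
      (by unfold schulzeLt; rw [not_lt]; exact (hKey y hyt).le)
  by_cases hxb : x = b
  · rw [hxb]
    have hyb : y ≠ b := fun h => hxy (hxb.trans h.symm)
    refine iff_of_true (hbot y hyb) ?_
    exact lt_of_le_of_lt (hBb y hyb) (lt_of_lt_of_le h24 (hLxb y hyt hyb))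
  by_cases hyb : y = b
  · rw [hyb]
    refine iff_of_false (asymm _ _ (hbot x hxb)) ?_
    unfold schulzeLt
    rw [not_lt]
    exact le_trans (hBb x hxb) (le_trans h24.le (hLxb x hxt hxb))
  -- both middle
  by_cases h1 : lt x y
  · refine iff_of_true h1 ?_
    exact lt_of_le_of_lt (hBmid x y hxt hxb (asymm _ _ h1) (Ne.symm hxy) hyb)
      (lt_of_lt_of_le h23 (hLmed y x hyt hyb hxt hxb h1))
  by_cases h2 : lt y x
  · refine iff_of_false h1 ?_
    unfold schulzeLt
    rw [not_lt]
    exact le_trans (hBmid y x hyt hyb (asymm _ _ h2) hxy hxb)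
      (le_trans h23.le (hLmed x y hxt hxb hyt hyb h2))
  · refine iff_of_false h1 ?_
    unfold schulzeLt
    rw [not_lt]
    exact le_trans (hBmid y x hyt hyb h1 hxy hxb) (hL2 x y hxt hxb hyt hyb hxy)
end
end

section
/- In the weight-pool construction realizing a given strict partial order with unique top t and unique bottom b, for any two middle elements x, y (distinct from t and b) with x ‖ y in the given order, the maxmin path weights satisfy B(x,y) = B(y,x) = the small weight of edge b→t, hence x ‖ y in the Schulze order. -/
noncomputable section
open Classical

/-- In the weight-pool construction realizing a strict partial order with unique top
`t` and unique bottom `b` (pools `large > medium > small > tiny > 0`: edges `t→x`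
and `x→b` get large weights, edges `x→y` with `x > y` get medium weights, edge
`b→t` gets the small weight, and one direction of each incomparable middle pair gets
a tiny weight, reverse edges negated), for any two middle elements `x ‖ y` the
maxmin path weights satisfy `B(x,y) = B(y,x) = w(b,t)` (the small weight), hence
`x ‖ y` in the Schulze order. -/
theorem weight_pool_incomparable {M : Type*} [Fintype M] (lt : M → M → Prop)
    (asymm : ∀ x y, lt x y → ¬ lt y x)
    (trans : ∀ x y z, lt x y → lt y z → lt x z)
    (t b : M) (htb : t ≠ b)
    (htop : ∀ x, x ≠ t → lt x t)
    (hbot : ∀ x, x ≠ b → lt b x)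
    (w : M → M → ℝ)
    (tinyHi smallW mediumLo mediumHi largeLo : ℝ)
    (hpools : 0 < tinyHi ∧ tinyHi < smallW ∧ smallW < mediumLo ∧
      mediumLo ≤ mediumHi ∧ mediumHi < largeLo)
    (hanti : ∀ x y, w x y = - w y x)
    (hlarge : ∀ x, x ≠ t → x ≠ b → largeLo < w t x ∧ largeLo < w x b)
    (hsmall : w b t = smallW)
    (hmed : ∀ x y, x ≠ t → x ≠ b → y ≠ t → y ≠ b → lt y x →
      mediumLo < w x y ∧ w x y < mediumHi)
    (htiny : ∀ x y, x ≠ t → x ≠ b → y ≠ t → y ≠ b → x ≠ y → ¬ lt x y → ¬ lt y x →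
      (0 < w x y ∧ w x y < tinyHi) ∨ (0 < w y x ∧ w y x < tinyHi)) :
    ∀ x y, x ≠ t → x ≠ b → y ≠ t → y ≠ b → x ≠ y → ¬ lt x y → ¬ lt y x →
      beat w x y = ((smallW : ℝ) : EReal) ∧ beat w y x = ((smallW : ℝ) : EReal) ∧
      ¬ schulzeLt w x y ∧ ¬ schulzeLt w y x := by

  obtain ⟨h0, h1, h2, h3, h4⟩ := hpools
  have hzero : ∀ a, w a a = 0 := fun a => by have := hanti a a; linarith
  have hbstuck : ∀ c, ¬ smallW < w b c := by
    intro c hc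
    by_cases hct : c = t
    · rw [hct, hsmall] at hc; exact lt_irrefl _ hc
    · by_cases hcb : c = b
      · rw [hcb, hzero] at hc; linarith
      · have h5 := (hlarge c hct hcb).2
        have h6 := hanti b c
        linarith
  have hclass : ∀ a c, a ≠ t → a ≠ b → smallW < w a c →
      c = b ∨ (c ≠ t ∧ c ≠ b ∧ lt c a) := by
    intro a c hat hab hc
    by_cases hcb : c = b
    · exact Or.inl hcb
    by_cases hct : c = t
    · exfalso; have h5 := (hlarge a hat hab).1
      have h6 := hanti a t; rw [hct] at hc; linarith
    by_cases hca : c = a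
    · exfalso; rw [hca, hzero a] at hc; linarith
    by_cases hlt : lt c a
    · exact Or.inr ⟨hct, hcb, hlt⟩
    by_cases hlt2 : lt a c
    · exfalso
      have h5 := (hmed c a hct hcb hat hab hlt2).1
      have h6 := hanti a c; linarith
    · exfalso
      rcases htiny a c hat hab hct hcb (fun h => hca h.symm) hlt2 hlt with ⟨_, h6⟩ | ⟨h6, _⟩
      · linarith
      · have h7 := hanti a c; linarith
  have chain : ∀ (l : List M) (a : M), l.head? = some a →
      ((smallW : ℝ) : EReal) < pathMin w l →
      (a = b → l.getLast? = some b) ∧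
      (a ≠ t → a ≠ b → ∃ z, l.getLast? = some z ∧
        (z = b ∨ (z ≠ t ∧ z ≠ b ∧ (z = a ∨ lt z a)))) := by
    intro l
    induction l with
    | nil => intro a ha; simp at ha
    | cons a' rest ih =>
      intro a ha hsm
      have haa : a' = a := by simpa using ha
      subst haa
      cases rest with
      | nil =>
        constructor
        · intro hab; simp [hab]
        · intro hat hab; exact ⟨a', by simp, Or.inr ⟨hat, hab, Or.inl rfl⟩⟩
      | cons c rest' =>
        have hpm : pathMin w (a' :: c :: rest') =
            min ((w a' c : ℝ) : EReal) (pathMin w (c :: rest')) := rfl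
        rw [hpm, lt_min_iff] at hsm
        obtain ⟨hedge, hrest⟩ := hsm
        have hedge' : smallW < w a' c := by exact_mod_cast hedge
        have ihc := ih c rfl hrest
        constructor
        · intro hab; exact absurd (hab ▸ hedge') (hbstuck c)
        · intro hat hab
          rcases hclass a' c hat hab hedge' with hcb | ⟨hct, hcb, hlt⟩
          · refine ⟨b, ?_, Or.inl rfl⟩
            rw [List.getLast?_cons_cons]
            exact ihc.1 hcb
          · obtain ⟨z, hz, hzc⟩ := ihc.2 hct hcb
            refine ⟨z, by rw [List.getLast?_cons_cons]; exact hz, ?_⟩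
            rcases hzc with hzb | ⟨hzt, hzb, hzc⟩
            · exact Or.inl hzb
            · refine Or.inr ⟨hzt, hzb, Or.inr ?_⟩
              rcases hzc with rfl | h
              · exact hlt
              · exact trans z c a' h hlt
  have key : ∀ x y, x ≠ t → x ≠ b → y ≠ t → y ≠ b → x ≠ y → ¬ lt y x →
      beat w x y = ((smallW : ℝ) : EReal) := by
    intro x y hxt hxb hyt hyb hxy hyx
    rw [beat, if_neg hxy]
    apply le_antisymm
    · apply sSup_le
      rintro m ⟨l, hh, hl, rfl⟩
      by_contra hm
      push_neg at hm
      obtain ⟨z, hz, hzc⟩ := (chain l x hh hm).2 hxt hxb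
      rw [hl] at hz
      have hzy : y = z := Option.some.inj hz
      subst hzy
      rcases hzc with h | ⟨_, _, h | h⟩
      · exact hyb h
      · exact hxy h.symm
      · exact hyx h
    · apply le_sSup
      refine ⟨[x, b, t, y], by simp, by simp, ?_⟩
      have lxb := (hlarge x hxt hxb).2
      have lty := (hlarge y hyt hyb).1
      have s1 : ((smallW : ℝ) : EReal) ≤ ((w t y : ℝ) : EReal) := by
        exact_mod_cast (by linarith : smallW ≤ w t y)
      have s2 : ((smallW : ℝ) : EReal) ≤ ((w x b : ℝ) : EReal) := by
        exact_mod_cast (by linarith : smallW ≤ w x b)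
      have : pathMin w [x, b, t, y] =
          min ((w x b : ℝ) : EReal) (min ((w b t : ℝ) : EReal)
            (min ((w t y : ℝ) : EReal) ⊤)) := rfl
      rw [this, hsmall, min_eq_left le_top, min_eq_left s1, min_eq_right s2]
  intro x y hxt hxb hyt hyb hxy hxy' hyx'
  have e1 := key x y hxt hxb hyt hyb hxy hyx'
  have e2 := key y x hyt hyb hxt hxb hxy.symm hxy'
  refine ⟨e1, e2, ?_, ?_⟩
  · rw [schulzeLt, e1, e2]; exact lt_irrefl _
  · rw [schulzeLt, e1, e2]; exact lt_irrefl _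
end
end
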